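/- A multisigned complete graph Σ on n ≥ 5 vertices contains at least two Hamiltonian cycles with different multisigns if and only if it contains at least two triangles with different multisigns. -/
import Mathlib


/-- The multisign of the Hamiltonian cycle listed by the bijection `v`. -/
def hamMultisign {n m : ℕ} [NeZero n] (σ : Fin n → Fin n → (Fin m → ℤˣ))
    (v : Fin n → Fin n) : Fin m → ℤˣ :=
  ∏ k : Fin n, σ (v k) (v (k + 1))

/-- The multisign of the triangle on vertices `a`, `b`, `c`. -/
def triMultisign {n m : ℕ} (σ : Fin n → Fin n → (Fin m → ℤˣ))
    (a b c : Fin n) : Fin m → ℤˣ :=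
  σ a b * σ b c * σ c a

namespace MultisignAux

variable {n m : ℕ} [NeZero n]

lemma fv0 : ((0:Fin n) : ℕ) = 0 := rfl
lemma fv1 (h : 5 ≤ n) : ((1:Fin n) : ℕ) = 1 := by
  simpa [OfNat.ofNat] using @Fin.val_cast_of_lt n _ 1 (by omega)
lemma fv2 (h : 5 ≤ n) : ((2:Fin n) : ℕ) = 2 := by
  simpa [OfNat.ofNat] using @Fin.val_cast_of_lt n _ 2 (by omega)
lemma fv3 (h : 5 ≤ n) : ((3:Fin n) : ℕ) = 3 := by
  simpa [OfNat.ofNat] using @Fin.val_cast_of_lt n _ 3 (by omega)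
lemma add01 (h : 5 ≤ n) : (0:Fin n) + 1 = 1 := by
  apply Fin.ext; rw [Fin.val_add, fv0, fv1 h, Nat.mod_eq_of_lt (by omega)]
lemma add12 (h : 5 ≤ n) : (1:Fin n) + 1 = 2 := by
  apply Fin.ext; rw [Fin.val_add, fv1 h, fv2 h, Nat.mod_eq_of_lt (by omega)]
lemma add23 (h : 5 ≤ n) : (2:Fin n) + 1 = 3 := by
  apply Fin.ext; rw [Fin.val_add, fv2 h, fv1 h, fv3 h, Nat.mod_eq_of_lt (by omega)]

lemma sqone (g : Fin m → ℤˣ) : g * g = 1 := by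
  funext k; exact Int.units_mul_self _

lemma eq_of_mul_eq_one {g h : Fin m → ℤˣ} (hh : g * h = 1) : g = h := by
  calc g = g * (h * h) := by rw [sqone, mul_one]
  _ = (g * h) * h := by rw [mul_assoc]
  _ = h := by rw [hh, one_mul]

lemma tri_rot (σ : Fin n → Fin n → (Fin m → ℤˣ)) (a b c : Fin n) :
    triMultisign σ a b c = triMultisign σ c a b := by
  simp [triMultisign, mul_comm, mul_left_comm, mul_assoc]

lemma tri_swap23 (σ : Fin n → Fin n → (Fin m → ℤˣ)) (hsym : ∀ a b, σ a b = σ b a)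
    (a b c : Fin n) : triMultisign σ a b c = triMultisign σ a c b := by
  simp only [triMultisign]
  rw [hsym a b, hsym b c, hsym c a]
  simp [mul_comm, mul_left_comm, mul_assoc]

lemma exists_perm4 (h : 5 ≤ n) (x a b y : Fin n) (hxa : x ≠ a) (hxb : x ≠ b)
    (hxy : x ≠ y) (hab : a ≠ b) (hay : a ≠ y) (hby : b ≠ y) :
    ∃ e : Equiv.Perm (Fin n), e 0 = x ∧ e 1 = a ∧ e 2 = b ∧ e 3 = y := by
  have n01 : (0:Fin n) ≠ 1 := by simp only [Ne, Fin.ext_iff, fv0, fv1 h]; omega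
  have n02 : (0:Fin n) ≠ 2 := by simp only [Ne, Fin.ext_iff, fv0, fv2 h]; omega
  have n03 : (0:Fin n) ≠ 3 := by simp only [Ne, Fin.ext_iff, fv0, fv3 h]; omega
  have n12 : (1:Fin n) ≠ 2 := by simp only [Ne, Fin.ext_iff, fv1 h, fv2 h]; omega
  have n13 : (1:Fin n) ≠ 3 := by simp only [Ne, Fin.ext_iff, fv1 h, fv3 h]; omega
  have n23 : (2:Fin n) ≠ 3 := by simp only [Ne, Fin.ext_iff, fv2 h, fv3 h]; omega
  set e1 : Equiv.Perm (Fin n) := Equiv.swap 0 x with he1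
  have e1_0 : e1 0 = x := Equiv.swap_apply_left 0 x
  set a1 := e1.symm a with ha1def
  have e1a1 : e1 a1 = a := Equiv.apply_symm_apply e1 a
  have ha10 : a1 ≠ 0 := fun hh => hxa (by rw [← e1_0, ← e1a1, hh])
  set e2 : Equiv.Perm (Fin n) := (Equiv.swap 1 a1).trans e1 with he2
  have e2_0 : e2 0 = x := by
    simp only [he2, Equiv.trans_apply]
    rw [Equiv.swap_apply_of_ne_of_ne n01 (Ne.symm ha10), e1_0]
  have e2_1 : e2 1 = a := by
    simp only [he2, Equiv.trans_apply]
    rw [Equiv.swap_apply_left, e1a1]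
  set b1 := e2.symm b with hb1def
  have e2b1 : e2 b1 = b := Equiv.apply_symm_apply e2 b
  have hb10 : b1 ≠ 0 := fun hh => hxb (by rw [← e2_0, ← e2b1, hh])
  have hb11 : b1 ≠ 1 := fun hh => hab (by rw [← e2_1, ← e2b1, hh])
  set e3 : Equiv.Perm (Fin n) := (Equiv.swap 2 b1).trans e2 with he3
  have e3_0 : e3 0 = x := by
    simp only [he3, Equiv.trans_apply]
    rw [Equiv.swap_apply_of_ne_of_ne n02 (Ne.symm hb10), e2_0]
  have e3_1 : e3 1 = a := by
    simp only [he3, Equiv.trans_apply]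
    rw [Equiv.swap_apply_of_ne_of_ne n12 (Ne.symm hb11), e2_1]
  have e3_2 : e3 2 = b := by
    simp only [he3, Equiv.trans_apply]
    rw [Equiv.swap_apply_left, e2b1]
  set y1 := e3.symm y with hy1def
  have e3y1 : e3 y1 = y := Equiv.apply_symm_apply e3 y
  have hy10 : y1 ≠ 0 := fun hh => hxy (by rw [← e3_0, ← e3y1, hh])
  have hy11 : y1 ≠ 1 := fun hh => hay (by rw [← e3_1, ← e3y1, hh])
  have hy12 : y1 ≠ 2 := fun hh => hby (by rw [← e3_2, ← e3y1, hh])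
  refine ⟨(Equiv.swap 3 y1).trans e3, ?_, ?_, ?_, ?_⟩
  · simp only [Equiv.trans_apply]
    rw [Equiv.swap_apply_of_ne_of_ne n03 (Ne.symm hy10), e3_0]
  · simp only [Equiv.trans_apply]
    rw [Equiv.swap_apply_of_ne_of_ne n13 (Ne.symm hy11), e3_1]
  · simp only [Equiv.trans_apply]
    rw [Equiv.swap_apply_of_ne_of_ne n23 (Ne.symm hy12), e3_2]
  · simp only [Equiv.trans_apply]
    rw [Equiv.swap_apply_left, e3y1]

lemma ham_swap (h : 5 ≤ n) (σ : Fin n → Fin n → (Fin m → ℤˣ))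
    (hsym : ∀ a b, σ a b = σ b a) (e : Equiv.Perm (Fin n)) :
    hamMultisign σ (⇑e ∘ ⇑(Equiv.swap (1:Fin n) 2)) * hamMultisign σ ⇑e =
      triMultisign σ (e 0) (e 1) (e 2) * triMultisign σ (e 3) (e 1) (e 2) := by
  have n01 : (0:Fin n) ≠ 1 := by simp only [Ne, Fin.ext_iff, fv0, fv1 h]; omega
  have n02 : (0:Fin n) ≠ 2 := by simp only [Ne, Fin.ext_iff, fv0, fv2 h]; omega
  have n13 : (1:Fin n) ≠ 3 := by simp only [Ne, Fin.ext_iff, fv1 h, fv3 h]; omega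
  have n23 : (2:Fin n) ≠ 3 := by simp only [Ne, Fin.ext_iff, fv2 h, fv3 h]; omega
  set s : Equiv.Perm (Fin n) := Equiv.swap 1 2 with hs
  have s0 : s 0 = 0 := Equiv.swap_apply_of_ne_of_ne n01 n02
  have s1 : s 1 = 2 := Equiv.swap_apply_left 1 2
  have s2 : s 2 = 1 := Equiv.swap_apply_right 1 2
  have s3 : s 3 = 3 := Equiv.swap_apply_of_ne_of_ne (Ne.symm n13) (Ne.symm n23)
  set v : Fin n → Fin n := ⇑e with hv
  set F : Fin n → (Fin m → ℤˣ) :=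
    fun k => σ (v (s k)) (v (s (k + 1))) * σ (v k) (v (k + 1)) with hF
  have hprod : hamMultisign σ (v ∘ ⇑s) * hamMultisign σ v = ∏ k : Fin n, F k := by
    rw [hamMultisign, hamMultisign, ← Finset.prod_mul_distrib]
    rfl
  have hout : ∀ k ∈ Finset.univ, k ∉ ({0, 2} : Finset (Fin n)) → F k = 1 := by
    intro k _ hk
    simp only [Finset.mem_insert, Finset.mem_singleton, not_or] at hk
    by_cases h1 : k = 1
    · subst h1
      simp only [hF, s1, add12 h, s2]
      rw [hsym (v 2) (v 1)]
      exact sqone _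
    · have hks : s k = k := Equiv.swap_apply_of_ne_of_ne h1 hk.2
      have hk1 : k + 1 ≠ 1 := by
        intro hh; exact hk.1 (by rw [eq_sub_of_add_eq hh, sub_self])
      have hk2 : k + 1 ≠ 2 := by
        intro hh; exact h1 (by rw [eq_sub_of_add_eq hh, ← eq_sub_of_add_eq (add12 h)])
      have hks1 : s (k + 1) = k + 1 := Equiv.swap_apply_of_ne_of_ne hk1 hk2
      simp only [hF, hks, hks1]
      exact sqone _
  have h02 : ∏ k : Fin n, F k = F 0 * F 2 := by
    rw [← Finset.prod_subset (Finset.subset_univ ({0, 2} : Finset (Fin n))) hout,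
      Finset.prod_pair n02]
  rw [hprod, h02]
  simp only [hF, s0, add01 h, s1, add12 h, s2, add23 h, s3]
  have expand : triMultisign σ (v 0) (v 1) (v 2) * triMultisign σ (v 3) (v 1) (v 2) =
      (σ (v 0) (v 2) * σ (v 0) (v 1) * (σ (v 1) (v 3) * σ (v 2) (v 3))) *
        (σ (v 1) (v 2) * σ (v 1) (v 2)) := by
    simp only [triMultisign, hsym (v 2) (v 0), hsym (v 3) (v 1), hsym (v 2) (v 3)]
    rw [hsym (v 3) (v 2)]
    simp [mul_comm, mul_left_comm, mul_assoc]
  rw [expand, sqone, mul_one]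

/-- If all triangles have the same multisign, every Hamiltonian cycle has
multisign `t ^ n`. -/
lemma ham_const (h : 5 ≤ n) (σ : Fin n → Fin n → (Fin m → ℤˣ))
    (hsym : ∀ a b, σ a b = σ b a)
    (Htri : ∀ a b c a' b' c' : Fin n,
      a ≠ b → b ≠ c → a ≠ c → a' ≠ b' → b' ≠ c' → a' ≠ c' →
      triMultisign σ a b c = triMultisign σ a' b' c')
    (v : Fin n → Fin n) (hv : Function.Bijective v) :
    hamMultisign σ v = (triMultisign σ 0 1 2) ^ n := by
  have n01 : (0:Fin n) ≠ 1 := by simp only [Ne, Fin.ext_iff, fv0, fv1 h]; omega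
  have n02 : (0:Fin n) ≠ 2 := by simp only [Ne, Fin.ext_iff, fv0, fv2 h]; omega
  have n12 : (1:Fin n) ≠ 2 := by simp only [Ne, Fin.ext_iff, fv1 h, fv2 h]; omega
  set t : Fin m → ℤˣ := triMultisign σ 0 1 2 with ht
  set g : Fin n → (Fin m → ℤˣ) := fun a => if a = 0 then t else σ a 0 with hg
  have key : ∀ a b : Fin n, a ≠ b → σ a b = g a * g b * t := by
    intro a b hab
    by_cases ha : a = 0
    · subst ha
      have hb : b ≠ 0 := Ne.symm hab
      simp only [hg, if_pos rfl, if_neg hb]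
      rw [mul_comm t (σ b 0), mul_assoc, sqone, mul_one, hsym]
    · by_cases hb : b = 0
      · subst hb
        simp only [hg, if_neg ha, if_pos rfl]
        rw [mul_assoc, sqone, mul_one]
      · have habc : triMultisign σ a b 0 = t :=
          Htri a b 0 0 1 2 hab hb ha n01 n12 n02
        have hab0 : σ a b * σ b 0 * σ 0 a = t := habc
        have h2 : (σ b 0 * σ 0 a) * (σ b 0 * σ 0 a) = 1 := sqone _
        have hres : σ a b = t * (σ b 0 * σ 0 a) := by
          calc σ a b = σ a b * ((σ b 0 * σ 0 a) * (σ b 0 * σ 0 a)) := by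
                rw [h2, mul_one]
          _ = (σ a b * σ b 0 * σ 0 a) * (σ b 0 * σ 0 a) := by
                simp [mul_comm, mul_left_comm, mul_assoc]
          _ = t * (σ b 0 * σ 0 a) := by rw [hab0]
        rw [hres]
        simp only [hg, if_neg ha, if_neg hb]
        rw [hsym 0 a]
        simp [mul_comm, mul_left_comm, mul_assoc]
  have hne : ∀ k : Fin n, v k ≠ v (k + 1) := by
    intro k hh
    have hk : k = k + 1 := hv.1 hh
    have : (1:Fin n) = 0 := by
      have := left_eq_add.mp hk
      exact this
    exact n01 (this.symm) |>.elim
  have step1 : hamMultisign σ v = ∏ k : Fin n, (g (v k) * g (v (k + 1)) * t) := by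
    rw [hamMultisign]
    exact Finset.prod_congr rfl fun k _ => key _ _ (hne k)
  rw [step1]
  rw [Finset.prod_mul_distrib, Finset.prod_mul_distrib, Finset.prod_const,
    Finset.card_univ, Fintype.card_fin]
  have hre : ∏ k : Fin n, g (v (k + 1)) = ∏ k : Fin n, g (v k) :=
    Fintype.prod_equiv (Equiv.addRight (1:Fin n)) _ _ fun k => rfl
  rw [hre, sqone, one_mul]

end MultisignAux

open MultisignAux in
/-- There exist two Hamiltonian cycles with different multisigns iff there
exist two triangles with different multisigns. -/
theorem two_ham_diff_iff_two_tri_diff (n m : ℕ) (hn : 5 ≤ n) [NeZero n]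
    (σ : Fin n → Fin n → (Fin m → ℤˣ))
    (hsym : ∀ a b, σ a b = σ b a) :
    (∃ v w : Fin n → Fin n, Function.Bijective v ∧ Function.Bijective w ∧
        hamMultisign σ v ≠ hamMultisign σ w) ↔
      (∃ a b c a' b' c' : Fin n,
        a ≠ b ∧ b ≠ c ∧ a ≠ c ∧ a' ≠ b' ∧ b' ≠ c' ∧ a' ≠ c' ∧
        triMultisign σ a b c ≠ triMultisign σ a' b' c') := by
  constructor
  · -- cycles differ ⇒ triangles differ; contrapositive
    intro ⟨v, w, hv, hw, hvw⟩
    by_contra hno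
    push_neg at hno
    have Htri : ∀ a b c a' b' c' : Fin n,
        a ≠ b → b ≠ c → a ≠ c → a' ≠ b' → b' ≠ c' → a' ≠ c' →
        triMultisign σ a b c = triMultisign σ a' b' c' := by
      intro a b c a' b' c' h1 h2 h3 h4 h5 h6
      exact hno a b c a' b' c' h1 h2 h3 h4 h5 h6
    rw [ham_const hn σ hsym Htri v hv, ham_const hn σ hsym Htri w hw] at hvw
    exact hvw rfl
  · -- triangles differ ⇒ cycles differ; contrapositive
    intro ⟨a, b, c, a', b', c', hab, hbc, hac, hab', hbc', hac', htri⟩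
    by_contra hno
    push_neg at hno
    have Hall : ∀ v w : Fin n → Fin n, Function.Bijective v → Function.Bijective w →
        hamMultisign σ v = hamMultisign σ w := fun v w hv hw => hno v w hv hw
    -- quadruple lemma
    have Hq : ∀ x u v y : Fin n, x ≠ u → x ≠ v → x ≠ y → u ≠ v → y ≠ u → y ≠ v →
        triMultisign σ x u v = triMultisign σ y u v := by
      intro x u v y hxu hxv hxy huv hyu hyv
      obtain ⟨e, he0, he1, he2, he3⟩ :=
        exists_perm4 hn x u v y hxu hxv hxy huv (Ne.symm hyu) (Ne.symm hyv)
      have hswap := ham_swap hn σ hsym e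
      have heq : hamMultisign σ (⇑e ∘ ⇑(Equiv.swap (1:Fin n) 2)) = hamMultisign σ ⇑e := by
        have : ⇑e ∘ ⇑(Equiv.swap (1:Fin n) 2) = ⇑((Equiv.swap (1:Fin n) 2).trans e) := rfl
        rw [this]
        exact Hall _ _ ((Equiv.swap (1:Fin n) 2).trans e).bijective e.bijective
      rw [heq, sqone] at hswap
      rw [he0, he1, he2, he3] at hswap
      exact eq_of_mul_eq_one hswap.symm
    -- step lemma: change the apex of a triangle over a fixed edge
    have S : ∀ u v w z : Fin n, u ≠ v → w ≠ u → w ≠ v → z ≠ u → z ≠ v →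
        triMultisign σ u v w = triMultisign σ u v z := by
      intro u v w z huv hwu hwv hzu hzv
      by_cases hwz : w = z
      · rw [hwz]
      · have := Hq w u v z hwu hwv hwz huv hzu hzv
        calc triMultisign σ u v w = triMultisign σ w u v := tri_rot σ u v w
        _ = triMultisign σ z u v := this
        _ = triMultisign σ u v z := (tri_rot σ u v z).symm
    -- fresh vertex
    obtain ⟨e, he⟩ : ∃ e : Fin n, e ∉ ({a, b, a', b'} : Finset (Fin n)) := by
      have hcard : ({a, b, a', b'} : Finset (Fin n)).card < Fintype.card (Fin n) := by
        have h4 : ({a, b, a', b'} : Finset (Fin n)).card ≤ 4 := by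
          apply le_trans (Finset.card_insert_le _ _)
          apply Nat.succ_le_succ
          apply le_trans (Finset.card_insert_le _ _)
          apply Nat.succ_le_succ
          apply le_trans (Finset.card_insert_le _ _)
          apply Nat.succ_le_succ
          exact le_of_eq (Finset.card_singleton _)
        rw [Fintype.card_fin]
        omega
      have hss : ({a, b, a', b'} : Finset (Fin n)) ⊂ Finset.univ := by
        rw [Finset.ssubset_univ_iff]
        intro hh
        rw [hh, Finset.card_univ] at hcard
        exact lt_irrefl _ hcard
      obtain ⟨e, he1, he2⟩ := Finset.exists_of_ssubset hss
      exact ⟨e, he2⟩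
    simp only [Finset.mem_insert, Finset.mem_singleton, not_or] at he
    obtain ⟨hea, heb, hea', heb'⟩ := he
    -- chain: tri a b c = tri a b e
    have step1 : triMultisign σ a b c = triMultisign σ a b e :=
      S a b c e hab (Ne.symm hac) (Ne.symm hbc) hea heb
    -- chain: tri a' b' e = tri a' b' c'
    have step3 : triMultisign σ a' b' e = triMultisign σ a' b' c' :=
      (S a' b' c' e hab' (Ne.symm hac') (Ne.symm hbc') hea' heb').symm
    -- replace first / second vertex helpers
    have repl1 : ∀ p q r p' : Fin n, p ≠ q → p ≠ r → q ≠ r → p' ≠ q → p' ≠ r →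
        triMultisign σ p q r = triMultisign σ p' q r := by
      intro p q r p' hpq hpr hqr hp'q hp'r
      calc triMultisign σ p q r = triMultisign σ q r p := (tri_rot σ q r p).symm
      _ = triMultisign σ q r p' := S q r p p' hqr hpq hpr hp'q hp'r
      _ = triMultisign σ p' q r := tri_rot σ q r p'
    have repl2 : ∀ p q r q' : Fin n, p ≠ q → p ≠ r → q ≠ r → q' ≠ p → q' ≠ r →
        triMultisign σ p q r = triMultisign σ p q' r := by
      intro p q r q' hpq hpr hqr hq'p hq'r
      calc triMultisign σ p q r = triMultisign σ p r q := tri_swap23 σ hsym p q r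
      _ = triMultisign σ p r q' := S p r q q' hpr (Ne.symm hpq) hqr hq'p hq'r
      _ = triMultisign σ p q' r := (tri_swap23 σ hsym p q' r).symm
    have swap12 : ∀ p q r : Fin n, triMultisign σ p q r = triMultisign σ q p r := by
      intro p q r
      calc triMultisign σ p q r = triMultisign σ p r q := tri_swap23 σ hsym p q r
      _ = triMultisign σ q p r := tri_rot σ p r q
    -- middle: tri a b e = tri a' b' e
    have step2 : triMultisign σ a b e = triMultisign σ a' b' e := by
      by_cases ha'a : a' = a
      · subst ha'a
        exact repl2 a' b e b' hab (Ne.symm hea') (Ne.symm heb) (Ne.symm hab') (Ne.symm heb')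
      · by_cases ha'b : a' = b
        · subst ha'b
          calc triMultisign σ a a' e = triMultisign σ a' a e := swap12 a a' e
          _ = triMultisign σ a' b' e :=
              repl2 a' a e b' (Ne.symm hab) (Ne.symm hea') (Ne.symm hea)
                (Ne.symm hab') (Ne.symm heb')
        · calc triMultisign σ a b e = triMultisign σ a' b e :=
                repl1 a b e a' hab (Ne.symm hea) (Ne.symm heb) ha'b (Ne.symm hea')
            _ = triMultisign σ a' b' e :=
                repl2 a' b e b' ha'b (Ne.symm hea') (Ne.symm heb) (Ne.symm hab') (Ne.symm heb')
    exact htri (step1.trans (step2.trans step3))
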